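/- Let X be a real Banach space, let (A_n) be an approximation scheme in X satisfying Shapiro's Theorem, and let F be a finite dimensional linear subspace of X. Then the approximation scheme (A_n + F) (where A_n + F = {a + f : a ∈ A_n, f ∈ F}) also satisfies Shapiro's Theorem: for every nonincreasing sequence of nonnegative reals ε_n → 0 there exists x ∈ X such that there is no constant C with E(x, A_n + F) ≤ C ε_n for all n. -/

import Mathlib

open Metric Filter Pointwise

/-- `(A, K)` is an approximation scheme on `X`: the sets `A n` form a strictly increasing
chain, `A n + A n ⊆ A (K n)` with `K n ≥ n`, each `A n` is closed under scalar
multiplication, and `⋃ n, A n` is dense in `X`. -/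
def IsApproximationScheme {X : Type*} [NormedAddCommGroup X] [NormedSpace ℝ X]
    (A : ℕ → Set X) (K : ℕ → ℕ) : Prop :=
  (∀ n, A n ⊂ A (n + 1)) ∧
  (∀ n, n ≤ K n ∧ A n + A n ⊆ A (K n)) ∧
  (∀ (n : ℕ) (c : ℝ), c • A n ⊆ A n) ∧
  Dense (⋃ n, A n)

/-- Admissible error sequences: nonnegative, nonincreasing, tending to `0`. -/
def NullSeq (ε : ℕ → ℝ) : Prop :=
  (∀ n, 0 ≤ ε n) ∧ Antitone ε ∧ Tendsto ε atTop (nhds 0)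

/-!
Suppose `(A n + F)` fails Shapiro's theorem for some `ε`. By Baire category the pointwise bounds
`E(x, A n + F) ≤ C_x ε n` become uniform on a ball, and homogeneity then gives a level `n₀` with
`E(x, A n₀ + F) ≤ ‖x‖ / 2` for all `x`. The finite dimensional `F` is removed by induction on its
dimension: a direction of `F` in the closure of `A n₀` is absorbed into `A (K n₀)`, and if there is
none, compactness of the unit sphere of `F` keeps `F` uniformly away from `A n₀`, so good
approximants `a + f` have `‖f‖ = O(‖x‖)` and one level `A N` approximates that `f` well enough.
This yields `m` with `E(x, A m) ≤ 3‖x‖ / 4`. Since `A j + A m ⊆ A (K j)` for `j ≥ m`, the relative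
error then decays geometrically along the iterates `K^[j] m`, so `E(x, A n) ≤ ‖x‖ ε' n` for some
admissible `ε'`, contradicting Shapiro's theorem for `(A n)`.
-/

theorem Submodule.exists_lt_le_span_singleton_sup {𝕜 V : Type*} [DivisionRing 𝕜] [AddCommGroup V]
    [Module 𝕜 V] (F : Submodule 𝕜 V) {u : V} (hu : u ∈ F) (hu0 : u ≠ 0) :
    ∃ F' < F, F ≤ (𝕜 ∙ u) ⊔ F' := by
  obtain ⟨W, hW⟩ := Submodule.exists_isCompl (𝕜 ∙ (⟨u, hu⟩ : F))
  have hmap : (𝕜 ∙ u) ⊔ W.map F.subtype = (⊤ : Submodule 𝕜 F).map F.subtype := by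
    rw [← hW.sup_eq_top, Submodule.map_sup, Submodule.map_span, Set.image_singleton]
    rfl
  refine ⟨W.map F.subtype, lt_of_le_of_ne (Submodule.map_subtype_le F W) fun h => hu0 ?_, ?_⟩
  · obtain ⟨y, hyW, hyu⟩ := Submodule.mem_map.1 (h ▸ hu)
    have hy : y ∈ (𝕜 ∙ (⟨u, hu⟩ : F)) ⊓ W :=
      ⟨Submodule.mem_span_singleton.2 ⟨1, Subtype.ext (by simpa using hyu.symm)⟩, hyW⟩
    rw [hW.inf_eq_bot, Submodule.mem_bot] at hy
    simpa [hy] using hyu.symm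
  · rw [hmap, Submodule.map_subtype_top]

theorem exists_ball_forall_le_mul_of_forall_exists_le_mul {X : Type*} [PseudoMetricSpace X]
    [BaireSpace X] [Nonempty X] {f : ℕ → X → ℝ} (hf : ∀ n, Continuous (f n)) {ε : ℕ → ℝ}
    (hε : ∀ n, 0 ≤ ε n) (hbound : ∀ x, ∃ C, ∀ n, f n x ≤ C * ε n) :
    ∃ x₀, ∃ r > 0, ∃ k : ℝ, ∀ y ∈ ball x₀ r, ∀ n, f n y ≤ k * ε n := by
  let S : ℕ → Set X := fun k => ⋂ n, {x | f n x ≤ k * ε n}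
  have hS : ∀ k, IsClosed (S k) := fun k =>
    isClosed_iInter fun n => isClosed_le (hf n) continuous_const
  have hcover : ⋃ k, S k = Set.univ := Set.eq_univ_of_forall fun x => by
    obtain ⟨C, hC⟩ := hbound x
    exact Set.mem_iUnion.2 ⟨⌈C⌉₊, Set.mem_iInter.2 fun n => (hC n).trans
      (mul_le_mul_of_nonneg_right (Nat.le_ceil C) (hε n))⟩
  obtain ⟨k, x₀, hx₀⟩ := nonempty_interior_of_iUnion_of_closed hS hcover
  obtain ⟨r, hr, hball⟩ := Metric.mem_nhds_iff.1 (mem_interior_iff_mem_nhds.1 hx₀)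
  exact ⟨x₀, r, hr, k, fun y hy => Set.mem_iInter.1 (hball hy)⟩

theorem eventually_subset_thickening_of_subset_closure_iUnion {X : Type*} [PseudoMetricSpace X]
    {S : Set X} (hS : IsCompact S) {A : ℕ → Set X} (hA : Monotone A)
    (hSA : S ⊆ closure (⋃ n, A n)) {δ : ℝ} (hδ : 0 < δ) :
    ∀ᶠ N in atTop, S ⊆ thickening δ (A N) := by
  have hcover : S ⊆ ⋃ n, thickening δ (A n) :=
    (hSA.trans (closure_subset_thickening hδ _)).trans (thickening_iUnion δ A).subset
  obtain ⟨N, hN⟩ := hS.elim_directed_cover _ (fun n => isOpen_thickening) hcover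
    (Monotone.directed_le fun _ _ h => thickening_subset_of_subset δ (hA h))
  exact eventually_atTop.2 ⟨N, fun M hM => hN.trans (thickening_subset_of_subset δ (hA hM))⟩

theorem nullSeq_pow_findGreatest (N : ℕ → ℕ) {c : ℝ} (hc0 : 0 ≤ c) (hc1 : c < 1) :
    NullSeq fun n => c ^ Nat.findGreatest (fun j => N j ≤ n) n := by
  have hmono : Monotone fun n => Nat.findGreatest (fun j => N j ≤ n) n := fun n n' h =>
    Nat.findGreatest_mono (fun _ hj => hj.trans h) h
  have htop : Tendsto (fun n => Nat.findGreatest (fun j => N j ≤ n) n) atTop atTop :=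
    tendsto_atTop_atTop.2 fun j => ⟨max j (N j), fun n hn =>
      Nat.le_findGreatest (le_of_max_le_left hn) (le_of_max_le_right hn)⟩
  exact ⟨fun n => pow_nonneg hc0 _, fun n n' h => pow_le_pow_of_le_one hc0 hc1.le (hmono h),
    (tendsto_pow_atTop_nhds_zero_of_lt_one hc0 hc1).comp htop⟩

section AddSubset

variable {X : Type*} [SeminormedAddCommGroup X] {s t u : Set X}

theorem infDist_add_le_of_add_subset (hs : s.Nonempty) (ht : t.Nonempty) (hst : s + t ⊆ u)
    (x y : X) : infDist (x + y) u ≤ infDist x s + infDist y t := by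
  have key : ∀ p ∈ s, ∀ q ∈ t, infDist (x + y) u ≤ dist x p + dist y q := fun p hp q hq =>
    (infDist_le_dist_of_mem (hst (Set.add_mem_add hp hq))).trans (dist_add_add_le x y p q)
  have hy : ∀ q ∈ t, infDist (x + y) u - dist y q ≤ infDist x s := fun q hq =>
    (le_infDist hs).2 fun p hp => by linarith [key p hp q hq]
  linarith [(le_infDist ht).2 fun q hq => show infDist (x + y) u - infDist x s ≤ dist y q by
    linarith [hy q hq]]

theorem infDist_le_mul_infDist_of_add_subset (hs : s.Nonempty) (ht : t.Nonempty)
    (hst : s + t ⊆ u) {c : ℝ} (hc : 0 ≤ c) (htc : ∀ y, infDist y t ≤ c * ‖y‖) (x : X) :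
    infDist x u ≤ c * infDist x s := by
  have := hs.to_subtype
  rw [infDist_eq_iInf (s := s), Real.mul_iInf_of_nonneg hc]
  refine le_ciInf fun ⟨p, hp⟩ => ?_
  calc infDist x u = infDist (p + (x - p)) u := by rw [add_sub_cancel]
    _ ≤ infDist p s + infDist (x - p) t := infDist_add_le_of_add_subset hs ht hst _ _
    _ ≤ c * dist x p := by rw [infDist_zero_of_mem hp, zero_add, dist_eq_norm]; exact htc _

end AddSubset

section ScalarClosed

variable {X : Type*} [NormedAddCommGroup X] [NormedSpace ℝ X] {s : Set X}

theorem Submodule.isCompact_inter_sphere (F : Submodule ℝ X) [FiniteDimensional ℝ F] (r : ℝ) :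
    IsCompact ((F : Set X) ∩ sphere 0 r) := by
  convert (isCompact_sphere (0 : F) r).image continuous_subtype_val using 1
  ext x
  simp [and_comm]

theorem infDist_smul_of_forall_smul_subset (hs : ∀ c : ℝ, c • s ⊆ s) (c : ℝ) (x : X) :
    infDist (c • x) s = |c| * infDist x s := by
  rcases eq_or_ne c 0 with rfl | hc
  · rcases s.eq_empty_or_nonempty with rfl | ⟨a, ha⟩
    · simp
    · simpa using infDist_zero_of_mem (hs 0 (Set.smul_mem_smul_set ha))
  · have hcs : c • s = s := by
      refine (hs c).antisymm fun y hy => ⟨c⁻¹ • y, hs c⁻¹ (Set.smul_mem_smul_set hy), ?_⟩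
      exact smul_inv_smul₀ hc y
    rw [← Real.norm_eq_abs, ← infDist_smul₀ hc, hcs]

theorem infDist_le_norm_of_forall_smul_subset (hs : ∀ c : ℝ, c • s ⊆ s) (x : X) :
    infDist x s ≤ ‖x‖ := by
  have h0 : infDist (0 : X) s = 0 := by
    simpa using infDist_smul_of_forall_smul_subset hs 0 0
  simpa [h0] using infDist_le_infDist_add_dist (x := x) (y := 0) (s := s)

theorem infDist_eq_norm_mul_infDist_smul_inv_norm (hs : ∀ c : ℝ, c • s ⊆ s) (x : X) :
    infDist x s = ‖x‖ * infDist (‖x‖⁻¹ • x) s := by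
  rcases eq_or_ne x 0 with rfl | hx
  · simpa using infDist_smul_of_forall_smul_subset hs 0 0
  · rw [← abs_norm x, ← infDist_smul_of_forall_smul_subset hs, abs_norm,
      smul_inv_smul₀ (norm_ne_zero_iff.2 hx)]

theorem infDist_le_mul_norm_of_forall_norm_eq_one (hs : ∀ c : ℝ, c • s ⊆ s)
    (F : Submodule ℝ X) {δ : ℝ} (h : ∀ y ∈ F, ‖y‖ = 1 → infDist y s ≤ δ) {x : X} (hx : x ∈ F) :
    infDist x s ≤ δ * ‖x‖ := by
  rcases eq_or_ne x 0 with rfl | hx0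
  · simpa using infDist_le_norm_of_forall_smul_subset hs 0
  rw [infDist_eq_norm_mul_infDist_smul_inv_norm hs, mul_comm δ]
  exact mul_le_mul_of_nonneg_left (h _ (F.smul_mem _ hx) (norm_smul_inv_norm hx0)) (norm_nonneg x)

theorem mul_norm_le_infDist_of_forall_norm_eq_one (hs : ∀ c : ℝ, c • s ⊆ s)
    (F : Submodule ℝ X) {η : ℝ} (h : ∀ y ∈ F, ‖y‖ = 1 → η ≤ infDist y s) {x : X} (hx : x ∈ F) :
    η * ‖x‖ ≤ infDist x s := by
  rcases eq_or_ne x 0 with rfl | hx0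
  · simpa using infDist_nonneg
  rw [infDist_eq_norm_mul_infDist_smul_inv_norm hs, mul_comm η]
  exact mul_le_mul_of_nonneg_left (h _ (F.smul_mem _ hx) (norm_smul_inv_norm hx0)) (norm_nonneg x)

theorem exists_pos_forall_mul_norm_le_infDist (hs : ∀ c : ℝ, c • s ⊆ s) (F : Submodule ℝ X)
    [FiniteDimensional ℝ F] (h : ∀ u ∈ F, u ≠ 0 → 0 < infDist u s) :
    ∃ η > 0, ∀ f ∈ F, η * ‖f‖ ≤ infDist f s := by
  obtain ⟨η, hη, hmin⟩ := (F.isCompact_inter_sphere 1).exists_forall_le'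
    (continuous_infDist_pt s).continuousOn fun w hw =>
      h w hw.1 (ne_zero_of_mem_unit_sphere ⟨w, hw.2⟩)
  exact ⟨η, hη, fun f hf => mul_norm_le_infDist_of_forall_norm_eq_one hs F
    (fun y hy hy1 => hmin y ⟨hy, mem_sphere_zero_iff_norm.2 hy1⟩) hf⟩

theorem exists_forall_infDist_le_mul_norm_of_forall_exists [CompleteSpace X] {B : ℕ → Set X}
    {K : ℕ → ℕ} (hsmul : ∀ n (c : ℝ), c • B n ⊆ B n) (hadd : ∀ n, B n + B n ⊆ B (K n))
    {ε : ℕ → ℝ} (hε : ∀ n, 0 ≤ ε n) (hbound : ∀ x, ∃ C, ∀ n, infDist x (B n) ≤ C * ε n) :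
    ∃ C, ∀ n, (B n).Nonempty → ∀ x, infDist x (B (K n)) ≤ C * ε n * ‖x‖ := by
  obtain ⟨x₀, r, hr, k, hk⟩ := exists_ball_forall_le_mul_of_forall_exists_le_mul
    (fun n => continuous_infDist_pt (B n)) hε hbound
  refine ⟨4 * k / r, fun n hne x => ?_⟩
  refine infDist_le_mul_norm_of_forall_norm_eq_one (hsmul (K n)) ⊤ (fun y _ hy => ?_)
    Submodule.mem_top
  -- `B n - B n ⊆ B (K n)` moves the bound from the ball around `x₀` to the ball around `0`
  have hz : infDist ((r / 2) • y) (B (K n)) ≤ 2 * k * ε n := by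
    have hx₀ : infDist (-x₀) (B n) = infDist x₀ (B n) := by
      simpa using infDist_smul_of_forall_smul_subset (hsmul n) (-1) x₀
    have hmem : x₀ + (r / 2) • y ∈ ball x₀ r := by
      rw [mem_ball, dist_eq_norm, add_sub_cancel_left, norm_smul, hy, Real.norm_eq_abs,
        abs_of_pos (by positivity)]
      linarith
    calc infDist ((r / 2) • y) (B (K n))
        = infDist ((x₀ + (r / 2) • y) + -x₀) (B (K n)) := by rw [add_neg_cancel_comm]
      _ ≤ infDist (x₀ + (r / 2) • y) (B n) + infDist (-x₀) (B n) :=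
          infDist_add_le_of_add_subset hne hne (hadd n) _ _
      _ ≤ k * ε n + k * ε n := by
          rw [hx₀]; exact add_le_add (hk _ hmem n) (hk _ (mem_ball_self hr) n)
      _ = 2 * k * ε n := by ring
  calc infDist y (B (K n)) = infDist ((2 / r) • (r / 2) • y) (B (K n)) := by
        rw [smul_smul, show 2 / r * (r / 2) = 1 by field_simp, one_smul]
    _ = 2 / r * infDist ((r / 2) • y) (B (K n)) := by
        rw [infDist_smul_of_forall_smul_subset (hsmul (K n)), abs_of_pos (by positivity)]
    _ ≤ 2 / r * (2 * k * ε n) := mul_le_mul_of_nonneg_left hz (by positivity)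
    _ = 4 * k / r * ε n := by ring

end ScalarClosed

namespace IsApproximationScheme

variable {X : Type*} [NormedAddCommGroup X] [NormedSpace ℝ X] {A : ℕ → Set X} {K : ℕ → ℕ}

theorem monotone (hA : IsApproximationScheme A K) : Monotone A :=
  monotone_nat_of_le_succ fun n => (hA.1 n).le

theorem le_apply (hA : IsApproximationScheme A K) (n : ℕ) : n ≤ K n := (hA.2.1 n).1

theorem add_subset (hA : IsApproximationScheme A K) (n : ℕ) : A n + A n ⊆ A (K n) := (hA.2.1 n).2

theorem smul_subset (hA : IsApproximationScheme A K) (n : ℕ) (c : ℝ) : c • A n ⊆ A n := hA.2.2.1 n c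

theorem dense (hA : IsApproximationScheme A K) : Dense (⋃ n, A n) := hA.2.2.2

theorem nonempty (hA : IsApproximationScheme A K) {n : ℕ} (hn : n ≠ 0) : (A n).Nonempty := by
  obtain ⟨x, hx, -⟩ := Set.exists_of_ssubset (hA.1 0)
  exact ⟨x, hA.monotone (Nat.one_le_iff_ne_zero.2 hn) hx⟩

theorem smul_add_submodule_subset (hA : IsApproximationScheme A K) (F : Submodule ℝ X) (n : ℕ)
    (c : ℝ) : c • (A n + (F : Set X)) ⊆ A n + (F : Set X) := by
  rw [smul_add]
  exact Set.add_subset_add (hA.smul_subset n c) (SetLike.smul_subset_self c F)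

theorem add_submodule_add_subset (hA : IsApproximationScheme A K) (F : Submodule ℝ X) (n : ℕ) :
    (A n + (F : Set X)) + (A n + (F : Set X)) ⊆ A (K n) + (F : Set X) := by
  rw [add_add_add_comm, coe_add_coe]
  exact Set.add_subset_add_right (hA.add_subset n)

theorem infDist_iterate_le (hA : IsApproximationScheme A K) {m : ℕ} (hm : (A m).Nonempty)
    {c : ℝ} (hc0 : 0 ≤ c) (hc : ∀ x, infDist x (A m) ≤ c * ‖x‖) (j : ℕ) (x : X) :
    infDist x (A (K^[j] m)) ≤ c ^ j * ‖x‖ := by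
  induction j generalizing x with
  | zero => simpa using infDist_le_norm_of_forall_smul_subset (hA.smul_subset m) x
  | succ j ih =>
    have hle : A m ⊆ A (K^[j] m) :=
      hA.monotone (Function.id_le_iterate_of_id_le hA.le_apply j m)
    have hadd : A (K^[j] m) + A m ⊆ A (K (K^[j] m)) :=
      (Set.add_subset_add_left hle).trans (hA.add_subset _)
    calc infDist x (A (K^[j + 1] m)) ≤ c * infDist x (A (K^[j] m)) := by
          rw [Function.iterate_succ_apply']
          exact infDist_le_mul_infDist_of_add_subset (hm.mono hle) hm hadd hc0 hc x
      _ ≤ c * (c ^ j * ‖x‖) := mul_le_mul_of_nonneg_left (ih x) hc0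
      _ = c ^ (j + 1) * ‖x‖ := by ring

theorem exists_nullSeq_forall_infDist_le (hA : IsApproximationScheme A K) {m : ℕ}
    (hm : (A m).Nonempty) {c : ℝ} (hc0 : 0 ≤ c) (hc1 : c < 1)
    (hc : ∀ x, infDist x (A m) ≤ c * ‖x‖) :
    ∃ ε, NullSeq ε ∧ ∀ x n, infDist x (A n) ≤ ‖x‖ * ε n := by
  refine ⟨_, nullSeq_pow_findGreatest (fun j => K^[j] m) hc0 hc1, fun x n => ?_⟩
  set j := Nat.findGreatest (fun j => K^[j] m ≤ n) n with hj
  rcases eq_or_ne j 0 with hj0 | hj0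
  · simpa [hj0] using infDist_le_norm_of_forall_smul_subset (hA.smul_subset n) x
  · have hle : A (K^[j] m) ⊆ A n := hA.monotone
      (Nat.findGreatest_of_ne_zero (P := fun j => K^[j] m ≤ n) hj.symm hj0)
    have hne : (A (K^[j] m)).Nonempty :=
      hm.mono (hA.monotone (Function.id_le_iterate_of_id_le hA.le_apply j m))
    calc infDist x (A n) ≤ infDist x (A (K^[j] m)) := infDist_le_infDist_of_subset hle hne
      _ ≤ c ^ j * ‖x‖ := hA.infDist_iterate_le hm hc0 hc j x
      _ = ‖x‖ * c ^ j := mul_comm _ _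

theorem eventually_forall_infDist_le_mul_norm (hA : IsApproximationScheme A K)
    (F : Submodule ℝ X) [FiniteDimensional ℝ F] {δ : ℝ} (hδ : 0 < δ) :
    ∀ᶠ M in atTop, ∀ f ∈ F, infDist f (A M) ≤ δ * ‖f‖ := by
  filter_upwards [eventually_subset_thickening_of_subset_closure_iUnion
    (F.isCompact_inter_sphere 1) hA.monotone (fun x _ => hA.dense x) hδ] with M hM f hf
  refine infDist_le_mul_norm_of_forall_norm_eq_one (hA.smul_subset M) F (fun y hy hy1 => ?_) hf
  obtain ⟨z, hz, hyz⟩ := mem_thickening_iff.1 (hM ⟨hy, mem_sphere_zero_iff_norm.2 hy1⟩)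
  exact (infDist_le_dist_of_mem hz).trans hyz.le

theorem exists_infDist_le_of_forall_infDist_pos (hA : IsApproximationScheme A K)
    (F : Submodule ℝ X) [FiniteDimensional ℝ F] {n : ℕ} (hn : (A n).Nonempty)
    (hF : ∀ u ∈ F, u ≠ 0 → 0 < infDist u (A n)) {c c' : ℝ} (hc0 : 0 ≤ c) (hcc' : c < c')
    (hc : ∀ x, infDist x (A n + (F : Set X)) ≤ c * ‖x‖) :
    ∃ m, (A m).Nonempty ∧ ∀ x, infDist x (A m) ≤ c' * ‖x‖ := by
  obtain ⟨η, hη, hηF⟩ := exists_pos_forall_mul_norm_le_infDist (hA.smul_subset n) F hF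
  set κ := (c' - c) / (1 + c) with hκ
  have hκ0 : 0 < κ := div_pos (by linarith) (by linarith)
  obtain ⟨M, hnM, hM⟩ := ((eventually_ge_atTop n).and
    (hA.eventually_forall_infDist_le_mul_norm F (mul_pos hκ0 hη))).exists
  have hMne : (A M).Nonempty := hn.mono (hA.monotone hnM)
  refine ⟨K M, hMne.mono (hA.monotone (hA.le_apply M)), fun x => ?_⟩
  have key : ∀ a ∈ A n, ∀ f ∈ F,
      infDist x (A (K M)) ≤ (1 + κ) * dist x (a + f) + κ * ‖x‖ := by
    intro a ha f hf
    -- the `F`-part of a good approximant is `O(‖x‖)` because `F` stays away from `A n`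
    have hf_small : η * ‖f‖ ≤ ‖x‖ + dist x (a + f) := by
      have hna : -a ∈ A n := by simpa using hA.smul_subset n (-1) (Set.smul_mem_smul_set ha)
      calc η * ‖f‖ ≤ dist f (-a) := (hηF f hf).trans (infDist_le_dist_of_mem hna)
        _ = ‖a + f‖ := by rw [dist_eq_norm, sub_neg_eq_add, add_comm]
        _ ≤ ‖x‖ + dist x (a + f) := by
          rw [dist_comm, dist_eq_norm]; exact norm_le_insert' _ _
    calc infDist x (A (K M)) = infDist (a + (x - a)) (A (K M)) := by rw [add_sub_cancel]
      _ ≤ infDist a (A M) + infDist (x - a) (A M) :=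
          infDist_add_le_of_add_subset hMne hMne (hA.add_subset M) _ _
      _ ≤ infDist f (A M) + dist (x - a) f := by
          rw [infDist_zero_of_mem (hA.monotone hnM ha), zero_add]
          exact infDist_le_infDist_add_dist
      _ ≤ κ * η * ‖f‖ + dist x (a + f) := by
          rw [dist_eq_norm, dist_eq_norm, sub_sub]; exact add_le_add (hM f hf) le_rfl
      _ ≤ (1 + κ) * dist x (a + f) + κ * ‖x‖ := by nlinarith [dist_nonneg (x := x) (y := a + f)]
  have hκ1 : 0 < 1 + κ := by linarith
  have hinf : (infDist x (A (K M)) - κ * ‖x‖) / (1 + κ) ≤ infDist x (A n + (F : Set X)) :=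
    (le_infDist (hn.add ⟨0, F.zero_mem⟩)).2 fun _ ⟨a, ha, f, hf, hp⟩ =>
      hp ▸ (div_le_iff₀' hκ1).2 (by linarith [key a ha f hf])
  have hc' : (1 + κ) * c + κ = c' := by rw [hκ]; field_simp; ring
  calc infDist x (A (K M)) ≤ (1 + κ) * infDist x (A n + (F : Set X)) + κ * ‖x‖ := by
        rw [div_le_iff₀' hκ1] at hinf; linarith
    _ ≤ (1 + κ) * (c * ‖x‖) + κ * ‖x‖ := by gcongr; exact hc x
    _ = c' * ‖x‖ := by rw [← hc']; ring

theorem infDist_add_submodule_le_of_infDist_eq_zero (hA : IsApproximationScheme A K) {n : ℕ}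
    (hn : (A n).Nonempty) {u : X} (hu : infDist u (A n) = 0) {F F' : Submodule ℝ X}
    (hF : F ≤ (ℝ ∙ u) ⊔ F') (x : X) :
    infDist x (A (K n) + (F' : Set X)) ≤ infDist x (A n + (F : Set X)) := by
  have hsub : A n + (F : Set X) ⊆ closure (A (K n) + (F' : Set X)) := by
    rintro _ ⟨a, ha, f, hf, rfl⟩
    obtain ⟨v, hv, z, hz, rfl⟩ := Submodule.mem_sup.1 (hF hf)
    obtain ⟨t, rfl⟩ := Submodule.mem_span_singleton.1 hv
    have htu : t • u ∈ closure (A n) :=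
      ((smul_closure_subset t (A n)).trans (closure_mono (hA.smul_subset n t)))
        (Set.smul_mem_smul_set ((mem_closure_iff_infDist_zero hn).2 hu))
    have hmaps : Set.MapsTo (fun y => a + y + z) (A n) (A (K n) + (F' : Set X)) := fun y hy =>
      Set.add_mem_add (hA.add_subset n (Set.add_mem_add ha hy)) hz
    simpa [add_assoc] using hmaps.closure (by fun_prop) htu
  rw [← infDist_closure]
  exact infDist_le_infDist_of_subset hsub (hn.add ⟨0, F.zero_mem⟩)

theorem exists_infDist_le_of_add_submodule (hA : IsApproximationScheme A K)
    (F : Submodule ℝ X) [FiniteDimensional ℝ F] {n : ℕ} (hn : (A n).Nonempty) {c c' : ℝ}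
    (hc0 : 0 ≤ c) (hcc' : c < c') (hc : ∀ x, infDist x (A n + (F : Set X)) ≤ c * ‖x‖) :
    ∃ m, (A m).Nonempty ∧ ∀ x, infDist x (A m) ≤ c' * ‖x‖ := by
  induction hd : Module.finrank ℝ F using Nat.strong_induction_on generalizing F n with
  | _ d ih =>
  by_cases hdeg : ∃ u ∈ F, u ≠ 0 ∧ infDist u (A n) = 0
  · obtain ⟨u, huF, hu0, hu⟩ := hdeg
    obtain ⟨F', hF'F, hF⟩ := F.exists_lt_le_span_singleton_sup huF hu0
    have : FiniteDimensional ℝ F' := Submodule.finiteDimensional_of_le hF'F.le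
    exact ih _ (hd ▸ Submodule.finrank_lt_finrank_of_lt hF'F) F'
      (hn.mono (hA.monotone (hA.le_apply n)))
      (fun x => (hA.infDist_add_submodule_le_of_infDist_eq_zero hn hu hF x).trans (hc x)) rfl
  · push Not at hdeg
    exact hA.exists_infDist_le_of_forall_infDist_pos F hn
      (fun u hu hu0 => infDist_nonneg.lt_of_ne' (hdeg u hu hu0)) hc0 hcc' hc

end IsApproximationScheme

/-- If an approximation scheme `(A n)` in a Banach space `X` satisfies Shapiro's Theorem
and `F` is a finite dimensional subspace of `X`, then the approximation scheme
`(A n + F)` satisfies Shapiro's Theorem as well. -/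
theorem stability_add_fin_dim
    {X : Type*} [NormedAddCommGroup X] [NormedSpace ℝ X] [CompleteSpace X]
    (A : ℕ → Set X) (K : ℕ → ℕ) (hA : IsApproximationScheme A K)
    (hShap : ∀ ε : ℕ → ℝ, NullSeq ε →
      ∃ x : X, ¬ ∃ C : ℝ, ∀ n : ℕ, infDist x (A n) ≤ C * ε n)
    (F : Submodule ℝ X) (hF : FiniteDimensional ℝ F) :
    ∀ ε : ℕ → ℝ, NullSeq ε →
      ∃ x : X, ¬ ∃ C : ℝ, ∀ n : ℕ, infDist x (A n + (F : Set X)) ≤ C * ε n := by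
  intro ε hε
  by_contra! hbound
  obtain ⟨C, hC⟩ := exists_forall_infDist_le_mul_norm_of_forall_exists
    (hA.smul_add_submodule_subset F) (hA.add_submodule_add_subset F) hε.1 hbound
  obtain ⟨n, hn, hCn⟩ := ((eventually_ne_atTop 0).and
    ((hε.2.2.const_mul C).eventually_lt_const (by norm_num : C * 0 < 1 / 2))).exists
  have hne : (A n).Nonempty := hA.nonempty hn
  obtain ⟨m, hm, hmx⟩ := hA.exists_infDist_le_of_add_submodule F
    (hne.mono (hA.monotone (hA.le_apply n))) (c := 1 / 2) (c' := 3 / 4) (by norm_num)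
    (by norm_num) fun x => (hC n (hne.add ⟨0, F.zero_mem⟩) x).trans
      (mul_le_mul_of_nonneg_right hCn.le (norm_nonneg x))
  obtain ⟨ε', hε', hε'x⟩ := hA.exists_nullSeq_forall_infDist_le hm (by norm_num) (by norm_num) hmx
  obtain ⟨x, hx⟩ := hShap ε' hε'
  exact hx ⟨‖x‖, hε'x x⟩
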